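/- Let 0 < α < 1 and define c : ℝ × ℝ → ℝ by c(x,t) = cos x · ∑_{k=0}^∞ (−1)^k t^(k(1−α)) / Γ(1 + k(1−α)) + sin x · ∑_{k=0}^∞ (−1)^k t^(k(1−α)+2) / Γ(k(1−α)+3) for t ≥ 0. Then (i) c(x,0) = cos x for all x, and (ii) for all x ∈ ℝ and t > 0, ∂c/∂t (x,t) = (1/Γ(1−α)) · ∂/∂t [ ∫₀ᵗ (t−τ)^(−α) · ∂²c/∂x² (x,τ) dτ ] + t sin x, i.e. c satisfies the time-fractional diffusion equation with the Riemann–Liouville fractional time derivative of order α acting on ∂²c/∂x² and source term t sin x. -/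

import Mathlib

/-!
With `β = 1 - α`, the two series in `exactSol` are Mittag-Leffler functions
`E_{β,γ}(z) = ∑ zᵏ / Γ(βk + γ)`: `c(x,t) = cos x · E_{β,1}(-t^β) + sin x · t² E_{β,3}(-t^β)`.
They are entire, because Gautschi's inequality makes `Γ(βk + γ) / Γ(β(k+1) + γ)` tend to `0`.
Integrating term by term against the kernel `(t - τ)^(β-1)` (Euler's Beta integral) and using
`E_{β,γ}(z) = 1/Γ(γ) + z E_{β,γ+β}(z)` gives
`∫₀ᵗ (t - τ)^(β-1) τ^(γ-1) E_{β,γ}(-τ^β) dτ = Γ(β) (t^(γ-1)/Γ(γ) - t^(γ-1) E_{β,γ}(-t^β))`.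
As `∂²c/∂x² = -c`, the fractional integral in the equation is
`-Γ(β) (cos x + t² sin x / 2 - c(x,t))`, and differentiating it in `t` gives the equation.
-/

open Real MeasureTheory

/-- The exact solution `c(x,t) = E_{1-α}(-t^(1-α)) cos x + t² E_{1-α,3}(-t^(1-α)) sin x`,
written term-by-term as series in `t`. -/
noncomputable def exactSol (α : ℝ) : ℝ × ℝ → ℝ :=
  fun p =>
    Real.cos p.1 *
        (∑' k : ℕ,
          (-1 : ℝ) ^ k * p.2 ^ ((k : ℝ) * (1 - α)) /
            Real.Gamma (1 + (k : ℝ) * (1 - α))) +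
      Real.sin p.1 *
        (∑' k : ℕ,
          (-1 : ℝ) ^ k * p.2 ^ ((k : ℝ) * (1 - α) + 2) /
            Real.Gamma ((k : ℝ) * (1 - α) + 3))

open Filter Set Topology FormalMultilinearSeries

namespace Real

/-- Gautschi's inequality, from the log-convexity of `Γ`. -/
theorem rpow_one_sub_mul_Gamma_add_le_Gamma_add_one {x s : ℝ} (hx : 0 < x) (hs0 : 0 < s)
    (hs1 : s < 1) : x ^ (1 - s) * Gamma (x + s) ≤ Gamma (x + 1) := by
  have hconv := Gamma_mul_add_mul_le_rpow_Gamma_mul_rpow_Gamma hx (by linarith : 0 < x + 1)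
    (sub_pos.2 hs1) hs0 (sub_add_cancel 1 s)
  have hΓx : Gamma x = Gamma (x + 1) / x := by rw [Gamma_add_one hx.ne']; field_simp
  have hΓ1 : 0 ≤ Gamma (x + 1) := (Gamma_pos_of_pos (by linarith)).le
  rw [show (1 - s) * x + s * (x + 1) = x + s by ring, hΓx, div_rpow hΓ1 hx.le, div_mul_eq_mul_div,
    ← rpow_add' hΓ1 (by norm_num), sub_add_cancel, rpow_one, le_div_iff₀ (rpow_pos_of_pos hx _)]
    at hconv
  linarith

theorem tendsto_Gamma_div_Gamma_add {β γ : ℝ} (hβ0 : 0 < β) (hβ1 : β < 1) :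
    Tendsto (fun k : ℕ => Gamma (β * k + γ) / Gamma (β * (k + 1) + γ)) atTop (𝓝 0) := by
  have hlin : Tendsto (fun k : ℕ => β * k + (γ + β - 1)) atTop atTop :=
    tendsto_atTop_add_const_right _ _ (tendsto_natCast_atTop_atTop.const_mul_atTop hβ0)
  refine squeeze_zero' ?_ ?_ ((tendsto_rpow_neg_atTop hβ0).comp hlin)
  all_goals filter_upwards [hlin.eventually_gt_atTop 0] with k hk
  · exact div_nonneg (Gamma_pos_of_pos (by linarith)).le (Gamma_pos_of_pos (by nlinarith)).le
  · have hgautschi := rpow_one_sub_mul_Gamma_add_le_Gamma_add_one hk (sub_pos.2 hβ1) (by linarith)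
    rw [sub_sub_cancel, show β * k + (γ + β - 1) + (1 - β) = β * k + γ by ring,
      show β * k + (γ + β - 1) + 1 = β * (k + 1) + γ by ring] at hgautschi
    rw [Function.comp_apply, rpow_neg hk.le, div_le_iff₀ (Gamma_pos_of_pos (by nlinarith)),
      inv_mul_eq_div, le_div_iff₀ (rpow_pos_of_pos hk _), mul_comm]
    exact hgautschi

end Real

section RiemannLiouville

variable {β γ s : ℝ}

theorem intervalIntegrable_rpow_sub_mul_rpow (hβ : 0 < β) (hγ : 0 < γ) (hs : 0 < s) :
    IntervalIntegrable (fun τ => (s - τ) ^ (β - 1) * τ ^ (γ - 1)) volume 0 s := by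
  have hleft : IntervalIntegrable (fun τ => (s - τ) ^ (β - 1) * τ ^ (γ - 1)) volume 0 (s / 2) := by
    refine (intervalIntegral.intervalIntegrable_rpow' (by linarith)).continuousOn_mul ?_
    intro τ hτ
    rw [uIcc_of_le (by positivity)] at hτ
    have hτs : s - τ ≠ 0 := (sub_pos.2 (show τ < s by linarith [hτ.2])).ne'
    exact ((continuousAt_const.sub continuousAt_id).rpow_const (Or.inl hτs)).continuousWithinAt
  have hright : IntervalIntegrable (fun τ => (s - τ) ^ (β - 1) * τ ^ (γ - 1)) volume (s / 2) s := by
    have h := (intervalIntegral.intervalIntegrable_rpow' (a := s / 2) (b := 0)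
      (by linarith : -1 < β - 1)).comp_sub_left s
    rw [sub_zero, show s - s / 2 = s / 2 by ring] at h
    refine h.mul_continuousOn fun τ hτ => ?_
    rw [uIcc_of_le (by linarith)] at hτ
    exact (continuousAt_rpow_const τ _ (Or.inl (by linarith [hτ.1]))).continuousWithinAt
  exact hleft.trans hright

theorem intervalIntegrable_rpow_sub_mul {g : ℝ → ℝ} (hβ : 0 < β)
    (hg : ContinuousOn g (uIcc 0 s)) :
    IntervalIntegrable (fun τ => (s - τ) ^ (β - 1) * g τ) volume 0 s := by
  have h := (intervalIntegral.intervalIntegrable_rpow' (a := 0) (b := s)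
    (by linarith : -1 < β - 1)).comp_sub_left s
  rw [sub_zero, sub_self] at h
  exact h.symm.mul_continuousOn hg

theorem integral_rpow_sub_mul_rpow (hβ : 0 < β) (hγ : 0 < γ) (hs : 0 < s) :
    ∫ τ in (0 : ℝ)..s, (s - τ) ^ (β - 1) * τ ^ (γ - 1) =
      Gamma β * Gamma γ / Gamma (β + γ) * s ^ (β + γ - 1) := by
  have hreal : ∫ τ in (0 : ℝ)..s, ((τ : ℂ) ^ ((γ : ℂ) - 1) * ((s : ℂ) - τ) ^ ((β : ℂ) - 1)) =
      ((∫ τ in (0 : ℝ)..s, (s - τ) ^ (β - 1) * τ ^ (γ - 1) : ℝ) : ℂ) := by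
    rw [← intervalIntegral.integral_ofReal]
    refine intervalIntegral.integral_congr fun τ hτ => ?_
    rw [uIcc_of_le hs.le] at hτ
    rw [Complex.ofReal_mul, Complex.ofReal_cpow (sub_nonneg.2 hτ.2), Complex.ofReal_cpow hτ.1,
      Complex.ofReal_sub, mul_comm]
    push_cast
    ring
  have hbeta := Complex.Gamma_mul_Gamma_eq_betaIntegral (s := γ) (t := β)
    (by simpa using hγ) (by simpa using hβ)
  have hΓ : (Gamma (γ + β) : ℂ) ≠ 0 := Complex.ofReal_ne_zero.2 (Gamma_pos_of_pos (by linarith)).ne'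
  rw [← Complex.ofReal_add, Complex.Gamma_ofReal, Complex.Gamma_ofReal, Complex.Gamma_ofReal]
    at hbeta
  have hB : Complex.betaIntegral γ β = Gamma γ * Gamma β / Gamma (γ + β) := by
    rw [eq_div_iff hΓ, hbeta, mul_comm]
  apply Complex.ofReal_injective
  rw [← hreal, Complex.betaIntegral_scaled _ _ hs, hB]
  push_cast [Complex.ofReal_cpow hs.le]
  ring_nf

end RiemannLiouville

noncomputable def mittagLefflerSeries (β γ : ℝ) : FormalMultilinearSeries ℝ ℝ ℝ :=
  ofScalars ℝ fun k : ℕ => (Gamma (β * k + γ))⁻¹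

/-- The two-parameter Mittag-Leffler function `E_{β,γ}`, as the sum of its power series
(junk value `0` outside the radius of convergence). -/
noncomputable def mittagLeffler (β γ : ℝ) : ℝ → ℝ :=
  (mittagLefflerSeries β γ).sum

section MittagLeffler

variable {β γ s : ℝ}

theorem mittagLeffler_eq_tsum (z : ℝ) :
    mittagLeffler β γ z = ∑' k : ℕ, z ^ k / Gamma (β * k + γ) := by
  simp only [mittagLeffler, mittagLefflerSeries, ← ofScalarsSum.eq_1, ofScalars_sum_eq,
    smul_eq_mul, inv_mul_eq_div]

theorem mittagLefflerSeries_radius_eq_top (hβ0 : 0 < β) (hβ1 : β < 1) :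
    (mittagLefflerSeries β γ).radius = ⊤ := by
  have hpos : ∀ᶠ k : ℕ in atTop, 0 < β * k + γ :=
    (tendsto_atTop_add_const_right _ γ
      (tendsto_natCast_atTop_atTop.const_mul_atTop hβ0)).eventually_gt_atTop 0
  refine ofScalars_radius_eq_top_of_tendsto ℝ _ ?_
    ((tendsto_Gamma_div_Gamma_add (γ := γ) hβ0 hβ1).congr' ?_)
  · filter_upwards [hpos] with k hk using inv_ne_zero (Gamma_pos_of_pos hk).ne'
  · filter_upwards [hpos] with k hk
    have hk' : 0 < β * (k + 1) + γ := by nlinarith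
    rw [Nat.cast_succ, norm_inv, norm_inv, norm_of_nonneg (Gamma_pos_of_pos hk).le,
      norm_of_nonneg (Gamma_pos_of_pos hk').le, inv_div_inv]

theorem summable_norm_pow_div_Gamma (hβ0 : 0 < β) (hβ1 : β < 1) (z : ℝ) :
    Summable fun k : ℕ => ‖z ^ k / Gamma (β * k + γ)‖ := by
  have h := (mittagLefflerSeries β γ).summable_norm_mul_pow (r := ‖z‖₊)
    (by rw [mittagLefflerSeries_radius_eq_top hβ0 hβ1]; exact ENNReal.coe_lt_top)
  simpa [mittagLefflerSeries, ofScalars_norm, div_eq_inv_mul, norm_mul, norm_pow] using h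

theorem differentiable_mittagLeffler (hβ0 : 0 < β) (hβ1 : β < 1) :
    Differentiable ℝ (mittagLeffler β γ) := by
  have h := ((mittagLefflerSeries β γ).hasFPowerSeriesOnBall
    (by rw [mittagLefflerSeries_radius_eq_top hβ0 hβ1]; exact ENNReal.zero_lt_top)).differentiableOn
  rw [mittagLefflerSeries_radius_eq_top hβ0 hβ1, Metric.eball_top] at h
  exact fun z => (h z (mem_univ z)).differentiableAt univ_mem

theorem mittagLeffler_zero : mittagLeffler β γ 0 = (Gamma γ)⁻¹ := by
  simp [mittagLeffler, mittagLefflerSeries, ← ofScalarsSum.eq_1]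

theorem mittagLeffler_eq_inv_Gamma_add_mul (hβ0 : 0 < β) (hβ1 : β < 1) (z : ℝ) :
    mittagLeffler β γ z = (Gamma γ)⁻¹ + z * mittagLeffler β (γ + β) z := by
  rw [mittagLeffler_eq_tsum, (summable_norm_pow_div_Gamma hβ0 hβ1 z).of_norm.tsum_eq_zero_add,
    mittagLeffler_eq_tsum, ← tsum_mul_left]
  congr 1
  · simp
  · refine tsum_congr fun k => ?_
    rw [pow_succ', Nat.cast_succ, mul_add_one, add_right_comm, add_assoc, mul_div_assoc]

theorem integral_rpow_sub_mul_mittagLeffler_term (hβ0 : 0 < β) (hγ : 0 < γ) (hs : 0 < s)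
    (μ : ℝ) (k : ℕ) :
    ∫ τ in Ioc 0 s, μ ^ k / Gamma (β * k + γ) * ((s - τ) ^ (β - 1) * τ ^ (β * k + γ - 1)) =
      Gamma β * s ^ (γ + β - 1) * ((μ * s ^ β) ^ k / Gamma (β * k + (γ + β))) := by
  have hk : 0 < β * k + γ := by positivity
  rw [integral_const_mul, ← intervalIntegral.integral_of_le hs.le,
    integral_rpow_sub_mul_rpow hβ0 hk hs, show β + (β * k + γ) - 1 = γ + β - 1 + β * k by ring,
    rpow_add hs, rpow_mul hs.le, rpow_natCast, show β + (β * k + γ) = β * k + (γ + β) by ring]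
  field [(Gamma_pos_of_pos hk).ne']

theorem integral_rpow_sub_mul_mittagLeffler (hβ0 : 0 < β) (hβ1 : β < 1) (hγ : 0 < γ) (hs : 0 < s)
    (μ : ℝ) :
    ∫ τ in (0 : ℝ)..s, (s - τ) ^ (β - 1) * (τ ^ (γ - 1) * mittagLeffler β γ (μ * τ ^ β)) =
      Gamma β * s ^ (γ + β - 1) * mittagLeffler β (γ + β) (μ * s ^ β) := by
  set F : ℕ → ℝ → ℝ := fun k τ =>
    μ ^ k / Gamma (β * k + γ) * ((s - τ) ^ (β - 1) * τ ^ (β * k + γ - 1))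
  have hint : ∀ k, Integrable (F k) (volume.restrict (Ioc 0 s)) := fun k =>
    ((intervalIntegrable_iff_integrableOn_Ioc_of_le hs.le).1
      (intervalIntegrable_rpow_sub_mul_rpow hβ0 (by positivity) hs)).const_mul _
  have hnorm : ∀ k, ∫ τ in Ioc 0 s, ‖F k τ‖ =
      Gamma β * s ^ (γ + β - 1) * ((|μ| * s ^ β) ^ k / Gamma (β * k + (γ + β))) := by
    intro k
    rw [← integral_rpow_sub_mul_mittagLeffler_term hβ0 hγ hs]
    refine setIntegral_congr_fun measurableSet_Ioc fun τ hτ => ?_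
    have hΓ := Gamma_pos_of_pos (by positivity : 0 < β * k + γ)
    have hτs : 0 ≤ s - τ := sub_nonneg.2 hτ.2
    simp only [F, norm_mul, norm_div, norm_pow, norm_of_nonneg hΓ.le,
      norm_of_nonneg (rpow_nonneg hτs _), norm_of_nonneg (rpow_nonneg hτ.1.le _), Real.norm_eq_abs]
  have hsummable : Summable fun k => ∫ τ in Ioc 0 s, ‖F k τ‖ := by
    simp_rw [hnorm]
    refine ((summable_norm_pow_div_Gamma (γ := γ + β) hβ0 hβ1 (|μ| * s ^ β)).congr
      fun k => ?_).mul_left _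
    exact norm_of_nonneg (div_nonneg (by positivity) (Gamma_pos_of_pos (by positivity)).le)
  have hseries : ∀ τ ∈ Ioc 0 s,
      (s - τ) ^ (β - 1) * (τ ^ (γ - 1) * mittagLeffler β γ (μ * τ ^ β)) = ∑' k, F k τ := by
    intro τ hτ
    rw [mittagLeffler_eq_tsum, ← tsum_mul_left, ← tsum_mul_left]
    refine tsum_congr fun k => ?_
    rw [mul_pow, ← rpow_mul_natCast hτ.1.le]
    simp only [F]
    rw [show β * k + γ - 1 = γ - 1 + β * k by ring, rpow_add hτ.1]
    ring
  rw [intervalIntegral.integral_of_le hs.le, setIntegral_congr_fun measurableSet_Ioc hseries,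
    ← integral_tsum_of_summable_integral_norm hint hsummable]
  simp_rw [F, integral_rpow_sub_mul_mittagLeffler_term hβ0 hγ hs]
  rw [tsum_mul_left, mittagLeffler_eq_tsum]

theorem integral_rpow_sub_mul_mittagLeffler_neg (hβ0 : 0 < β) (hβ1 : β < 1) (hγ : 0 < γ)
    (hs : 0 < s) :
    ∫ τ in (0 : ℝ)..s, (s - τ) ^ (β - 1) * (τ ^ (γ - 1) * mittagLeffler β γ (-τ ^ β)) =
      Gamma β * (s ^ (γ - 1) / Gamma γ - s ^ (γ - 1) * mittagLeffler β γ (-s ^ β)) := by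
  have h := integral_rpow_sub_mul_mittagLeffler hβ0 hβ1 hγ hs (-1)
  simp only [neg_one_mul] at h
  rw [h, mittagLeffler_eq_inv_Gamma_add_mul (γ := γ) hβ0 hβ1 (-s ^ β),
    show γ + β - 1 = γ - 1 + β by ring, rpow_add hs]
  ring

theorem continuous_rpow_mul_mittagLeffler (hβ0 : 0 < β) (hβ1 : β < 1) (hγ : 1 ≤ γ) :
    Continuous fun τ => τ ^ (γ - 1) * mittagLeffler β γ (-τ ^ β) :=
  (continuous_rpow_const (by linarith)).mul
    ((differentiable_mittagLeffler hβ0 hβ1).continuous.comp (continuous_rpow_const hβ0.le).neg)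

end MittagLeffler

theorem iteratedDeriv_two_cos_mul_add_sin_mul (a b x : ℝ) :
    iteratedDeriv 2 (fun y => cos y * a + sin y * b) x = -(cos x * a + sin x * b) := by
  have hderiv : deriv (fun y => cos y * a + sin y * b) = fun y => cos y * b - sin y * a :=
    funext fun y =>
      (((hasDerivAt_cos y).mul_const a).add ((hasDerivAt_sin y).mul_const b)).deriv.trans (by ring)
  have hderiv2 : HasDerivAt (fun y => cos y * b - sin y * a) (-sin x * b - cos x * a) x :=
    ((hasDerivAt_cos x).mul_const b).sub ((hasDerivAt_sin x).mul_const a)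
  rw [iteratedDeriv_succ, iteratedDeriv_one, hderiv, hderiv2.deriv]
  ring

section ExactSolution

variable {α : ℝ}

theorem exactSol_eq (hα : α < 1) {τ : ℝ} (hτ : 0 ≤ τ) (x : ℝ) :
    exactSol α (x, τ) = cos x * mittagLeffler (1 - α) 1 (-τ ^ (1 - α)) +
      sin x * (τ ^ 2 * mittagLeffler (1 - α) 3 (-τ ^ (1 - α))) := by
  have hpow : ∀ k : ℕ, (-τ ^ (1 - α)) ^ k = (-1) ^ k * τ ^ ((k : ℝ) * (1 - α)) := fun k => by
    rw [neg_pow, ← rpow_mul_natCast hτ, mul_comm (k : ℝ)]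
  have hcos : ∀ k : ℕ, (-1 : ℝ) ^ k * τ ^ ((k : ℝ) * (1 - α)) / Gamma (1 + (k : ℝ) * (1 - α)) =
      (-τ ^ (1 - α)) ^ k / Gamma ((1 - α) * k + 1) := fun k => by
    rw [hpow, add_comm, mul_comm (1 - α)]
  have hsin : ∀ k : ℕ,
      (-1 : ℝ) ^ k * τ ^ ((k : ℝ) * (1 - α) + 2) / Gamma ((k : ℝ) * (1 - α) + 3) =
      τ ^ 2 * ((-τ ^ (1 - α)) ^ k / Gamma ((1 - α) * k + 3)) := fun k => by
    have hk : (k : ℝ) * (1 - α) + 2 ≠ 0 := by nlinarith [(k.cast_nonneg : (0 : ℝ) ≤ k)]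
    rw [hpow, rpow_add' hτ hk, rpow_two, mul_comm (1 - α)]
    ring
  simp only [exactSol, tsum_congr hcos, tsum_congr hsin, tsum_mul_left, mittagLeffler_eq_tsum]

theorem exactSol_zero (hα : α < 1) (x : ℝ) : exactSol α (x, 0) = cos x := by
  rw [exactSol_eq hα le_rfl, zero_rpow (by linarith), neg_zero, mittagLeffler_zero]
  simp

theorem iteratedDeriv_two_exactSol (x τ : ℝ) :
    iteratedDeriv 2 (fun y => exactSol α (y, τ)) x = -exactSol α (x, τ) := by
  simp only [exactSol]
  exact iteratedDeriv_two_cos_mul_add_sin_mul _ _ x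

theorem differentiableAt_exactSol (hα0 : 0 < α) (hα1 : α < 1) (x : ℝ) {t : ℝ} (ht : 0 < t) :
    DifferentiableAt ℝ (fun s => exactSol α (x, s)) t := by
  have hE : ∀ γ, Differentiable ℝ (mittagLeffler (1 - α) γ) := fun γ =>
    differentiable_mittagLeffler (by linarith) (by linarith)
  have hpow : DifferentiableAt ℝ (fun s : ℝ => -s ^ (1 - α)) t :=
    (differentiableAt_id.rpow_const (Or.inl ht.ne')).neg
  refine (Filter.EventuallyEq.differentiableAt_iff ?_).2
    ((((hE 1).differentiableAt.comp t hpow).const_mul (cos x)).add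
      (((differentiableAt_id.pow 2).mul ((hE 3).differentiableAt.comp t hpow)).const_mul (sin x)))
  filter_upwards [Ioi_mem_nhds ht] with s hs using exactSol_eq hα1 hs.le x

theorem integral_exactSol (hα0 : 0 < α) (hα1 : α < 1) (x : ℝ) {s : ℝ} (hs : 0 < s) :
    ∫ τ in (0 : ℝ)..s, (s - τ) ^ (-α) * iteratedDeriv 2 (fun y => exactSol α (y, τ)) x =
      -(Gamma (1 - α) * (cos x + sin x * s ^ 2 / 2 - exactSol α (x, s))) := by
  have hβ0 : 0 < 1 - α := by linarith
  have hβ1 : 1 - α < 1 := by linarith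
  set I : ℝ → ℝ := fun γ => ∫ τ in (0 : ℝ)..s,
    (s - τ) ^ (1 - α - 1) * (τ ^ (γ - 1) * mittagLeffler (1 - α) γ (-τ ^ (1 - α))) with hI
  have hint : ∀ γ, 1 ≤ γ → IntervalIntegrable (fun τ => (s - τ) ^ (1 - α - 1) *
      (τ ^ (γ - 1) * mittagLeffler (1 - α) γ (-τ ^ (1 - α)))) volume 0 s := fun γ hγ =>
    intervalIntegrable_rpow_sub_mul hβ0
      (continuous_rpow_mul_mittagLeffler hβ0 hβ1 hγ).continuousOn
  have hI_eq : ∀ γ, 0 < γ →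
      I γ = Gamma (1 - α) * (s ^ (γ - 1) / Gamma γ - s ^ (γ - 1) *
        mittagLeffler (1 - α) γ (-s ^ (1 - α))) := fun γ hγ =>
    integral_rpow_sub_mul_mittagLeffler_neg hβ0 hβ1 hγ hs
  have hsplit : ∫ τ in (0 : ℝ)..s,
      (s - τ) ^ (-α) * iteratedDeriv 2 (fun y => exactSol α (y, τ)) x =
        -(cos x * I 1 + sin x * I 3) := by
    rw [hI, ← intervalIntegral.integral_const_mul, ← intervalIntegral.integral_const_mul,
      ← intervalIntegral.integral_add ((hint 1 le_rfl).const_mul _)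
        ((hint 3 (by norm_num)).const_mul _), ← intervalIntegral.integral_neg]
    refine intervalIntegral.integral_congr fun τ hτ => ?_
    rw [uIcc_of_le hs.le] at hτ
    rw [iteratedDeriv_two_exactSol, exactSol_eq hα1 hτ.1, show 1 - α - 1 = -α by ring, sub_self,
      rpow_zero, show (3 : ℝ) - 1 = 2 by norm_num, rpow_two]
    ring
  have hΓ3 : Gamma 3 = 2 := by
    rw [show (3 : ℝ) = 2 + 1 by norm_num, Gamma_add_one two_ne_zero, Gamma_two, mul_one]
  rw [hsplit, hI_eq 1 one_pos, hI_eq 3 (by norm_num), exactSol_eq hα1 hs.le, sub_self, rpow_zero,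
    Gamma_one, show (3 : ℝ) - 1 = 2 by norm_num, rpow_two, hΓ3]
  ring

end ExactSolution

theorem exactSol_solves_fractional_pde (α : ℝ) (hα0 : 0 < α) (hα1 : α < 1) :
    (∀ x : ℝ, exactSol α (x, 0) = Real.cos x) ∧
    (∀ x t : ℝ, 0 < t →
      deriv (fun s => exactSol α (x, s)) t =
        (1 / Real.Gamma (1 - α)) *
            deriv (fun s => ∫ τ in (0:ℝ)..s,
              (s - τ) ^ (-α) * iteratedDeriv 2 (fun y => exactSol α (y, τ)) x) t +
          t * Real.sin x) := by
  refine ⟨exactSol_zero hα1, fun x t ht => ?_⟩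
  have hintegral : (fun s => ∫ τ in (0 : ℝ)..s,
      (s - τ) ^ (-α) * iteratedDeriv 2 (fun y => exactSol α (y, τ)) x) =ᶠ[𝓝 t]
      fun s => -(Gamma (1 - α) * (cos x + sin x * s ^ 2 / 2 - exactSol α (x, s))) := by
    filter_upwards [Ioi_mem_nhds ht] with s hs using integral_exactSol hα0 hα1 x hs
  have hderiv : HasDerivAt
      (fun s => -(Gamma (1 - α) * (cos x + sin x * s ^ 2 / 2 - exactSol α (x, s))))
      (-(Gamma (1 - α) * (sin x * t - deriv (fun s => exactSol α (x, s)) t))) t := by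
    refine (((((hasDerivAt_const t (cos x)).add
      (((hasDerivAt_pow 2 t).const_mul (sin x)).div_const 2)).sub
      (differentiableAt_exactSol hα0 hα1 x ht).hasDerivAt).const_mul _).neg).congr_deriv ?_
    ring
  rw [hintegral.deriv_eq, hderiv.deriv]
  field_simp [(Gamma_pos_of_pos (sub_pos.2 hα1)).ne']
  ring
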